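/- Every (ε,0)-differentially private PAC k-learner for a concept class C containing at least two distinct concepts, with accuracy parameters α < 1 and β = 1/2, requires sample complexity n = Ω(k/ε). Specifically, n ≥ (k·ln 2 − ln 2)/ε. -/

import Mathlib

/-!
Under the point mass at `x₀`, a hypothesis with error `≤ α < 1` must agree with its target at
`x₀`, so the success events of the `2 ^ k` labelings in `{f, g} ^ k` are pairwise disjoint, and
each has probability at least `1 / 2`. Group privacy moves all of them to one fixed database at
the cost of a factor `e ^ (n ε)`, hence `2 ^ k / 2 ≤ e ^ (n ε)`.
-/

open MeasureTheory Function
open scoped ENNReal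

theorem MeasureTheory.lintegral_dirac_le {α : Type*} [MeasurableSpace α] (a : α) (f : α → ℝ≥0∞) :
    ∫⁻ x, f x ∂Measure.dirac a ≤ f a := by
  obtain ⟨g, hg, hgf, hfg⟩ := exists_measurable_le_lintegral_eq (Measure.dirac a) f
  rw [hfg, lintegral_dirac' a hg]
  exact hgf a

theorem MeasureTheory.Measure.pi_dirac {ι : Type*} [Fintype ι] {α : ι → Type*}
    [∀ i, MeasurableSpace (α i)] (a : ∀ i, α i) :
    Measure.pi (fun i => Measure.dirac (a i)) = Measure.dirac a := by
  classical
  refine Measure.pi_eq fun s hs => ?_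
  simp only [Measure.dirac_apply' _ (MeasurableSet.univ_pi hs), Measure.dirac_apply' _ (hs _),
    Set.indicator_apply, Set.mem_univ_pi, Pi.one_apply]
  by_cases h : ∀ i, a i ∈ s i
  · simp [h]
  · obtain ⟨i, hi⟩ := not_forall.mp h
    rw [if_neg h, Finset.prod_eq_zero (Finset.mem_univ i) (if_neg hi)]

theorem MeasureTheory.Measure.eq_of_dirac_setOf_ne_lt_one {α β : Type*} [MeasurableSpace α]
    {a : α} {h c : α → β} (hlt : Measure.dirac a {x | h x ≠ c x} < 1) : h a = c a := by
  by_contra hne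
  rw [Measure.dirac_apply_of_mem hne] at hlt
  exact lt_irrefl 1 hlt

theorem PMF.sum_toOuterMeasure_le_one {ι α : Type*} [Fintype ι] (p : PMF α) {T : ι → Set α}
    (hT : Pairwise (Disjoint on T)) : ∑ i, p.toOuterMeasure (T i) ≤ 1 := by
  calc ∑ i, p.toOuterMeasure (T i)
      = ∑' x, ∑ i, (T i).indicator p x := by
        simp only [PMF.toOuterMeasure_apply]
        exact (Summable.tsum_finsetSum fun i _ => ENNReal.summable).symm
    _ = p.toOuterMeasure (⋃ i ∈ Finset.univ, T i) := by
        rw [PMF.toOuterMeasure_apply]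
        exact tsum_congr fun x =>
          (Finset.indicator_biUnion_apply _ _ (hT.set_pairwise _) x).symm
    _ ≤ p.toOuterMeasure Set.univ := measure_mono (Set.subset_univ _)
    _ = 1 := (p.toOuterMeasure_apply_eq_one_iff _).2 (Set.subset_univ _)

theorem PMF.card_mul_le_of_pairwise_disjoint {ι α : Type*} [Fintype ι] (p : PMF α)
    {T : ι → Set α} (hT : Pairwise (Disjoint on T)) {δ c : ℝ≥0∞}
    (h : ∀ i, δ ≤ c * p.toOuterMeasure (T i)) : Fintype.card ι * δ ≤ c :=
  calc Fintype.card ι * δ = ∑ _i : ι, δ := by simp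
    _ ≤ ∑ i, c * p.toOuterMeasure (T i) := Finset.sum_le_sum fun i _ => h i
    _ = c * ∑ i, p.toOuterMeasure (T i) := (Finset.mul_sum _ _ _).symm
    _ ≤ c := mul_le_of_le_one_right' (p.sum_toOuterMeasure_le_one hT)

theorem le_pow_card_mul_of_neighbor_le {ι R : Type*} [DecidableEq ι] {F : (ι → R) → ℝ≥0∞}
    {c : ℝ≥0∞} (hF : ∀ S S' : ι → R, (∃ i₀, ∀ i, i ≠ i₀ → S i = S' i) → F S ≤ c * F S')
    (s : Finset ι) {S S' : ι → R} (hSS' : ∀ i ∉ s, S i = S' i) : F S ≤ c ^ s.card * F S' := by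
  induction s using Finset.induction_on generalizing S' with
  | empty =>
    rw [funext fun i => hSS' i (Finset.notMem_empty i)]
    simp
  | insert a s ha ih =>
    have hS : ∀ i ∉ s, S i = update S' a (S a) i := by
      intro i hi
      by_cases hia : i = a
      · subst hia; simp
      · rw [update_of_ne hia]
        exact hSS' i (by simp [hia, hi])
    calc F S ≤ c ^ s.card * F (update S' a (S a)) := ih hS
      _ ≤ c ^ s.card * (c * F S') := by
        gcongr
        exact hF _ _ ⟨a, fun i hi => update_of_ne hi _ _⟩
      _ = c ^ (insert a s).card * F S' := by
        rw [Finset.card_insert_of_notMem ha, pow_succ, mul_assoc]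

theorem log_two_mul_sub_div_le_of_two_pow_half_le {k n : ℕ} {ε : ℝ} (hε : 0 < ε)
    (h : (2 : ℝ≥0∞) ^ k * (1 / 2) ≤ ENNReal.ofReal (Real.exp ε) ^ n) :
    ((k : ℝ) * Real.log 2 - Real.log 2) / ε ≤ n := by
  have two_pow_half_le : (2 : ℝ) ^ k / 2 ≤ Real.exp (n * ε) := by
    rw [← ENNReal.ofReal_le_ofReal_iff (Real.exp_pos _).le, Real.exp_nat_mul,
      ENNReal.ofReal_pow (Real.exp_pos _).le, ENNReal.ofReal_div_of_pos two_pos,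
      ENNReal.ofReal_pow zero_le_two]
    simpa [div_eq_mul_inv] using h
  have := Real.log_le_log (by positivity) two_pow_half_le
  rw [Real.log_div (by positivity) two_ne_zero, Real.log_pow, Real.log_exp] at this
  rw [div_le_iff₀ hε]
  linarith

theorem private_multilearner_pure_lower_bound_general
    {X : Type*} [MeasurableSpace X] (C : Set (X → Bool))
    (f g : X → Bool) (hf : f ∈ C) (hg : g ∈ C) (x₀ : X) (hfg : f x₀ ≠ g x₀)
    (k n : ℕ) (α ε : ℝ) (hα1 : α < 1) (hε : 0 < ε)
    (A : (Fin n → X × (Fin k → Bool)) → PMF (Fin k → (X → Bool)))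
    -- (ε,0)-differential privacy with respect to changing one row:
    (hDP : ∀ S S' : Fin n → X × (Fin k → Bool),
      (∃ i₀ : Fin n, ∀ i : Fin n, i ≠ i₀ → S i = S' i) →
      ∀ T : Set (Fin k → (X → Bool)),
        (A S).toOuterMeasure T ≤ ENNReal.ofReal (Real.exp ε) * (A S').toOuterMeasure T)
    -- utility: for every distribution `D` and targets `c j ∈ C`, with probability at
    -- least `1 − β = 1/2` over an i.i.d. sample and the learner's coins, every output
    -- hypothesis `h j` has `error_D(c j, h j) ≤ α`:
    (hUtility : ∀ (D : Measure X) [IsProbabilityMeasure D],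
      ∀ c : Fin k → (X → Bool), (∀ j, c j ∈ C) →
      (1 : ENNReal) / 2 ≤
        ∫⁻ xs, (A (fun i => (xs i, fun j => c j (xs i)))).toOuterMeasure
            {h : Fin k → (X → Bool) |
              ∀ j, D {x | h j x ≠ c j x} ≤ ENNReal.ofReal α}
          ∂(Measure.pi (fun _ : Fin n => D))) :
    ((k : ℝ) * Real.log 2 - Real.log 2) / ε ≤ (n : ℝ) := by
  classical
  let target : (Fin k → Bool) → Fin k → X → Bool := fun b j => if b j then f else g
  let sample : (Fin k → Bool) → Fin n → X × (Fin k → Bool) :=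
    fun b _ => (x₀, fun j => target b j x₀)
  let good : (Fin k → Bool) → Set (Fin k → X → Bool) := fun b =>
    {h | ∀ j, Measure.dirac x₀ {x | h j x ≠ target b j x} ≤ ENNReal.ofReal α}
  have good_eq : ∀ b, ∀ h ∈ good b, ∀ j, h j x₀ = target b j x₀ := fun b h hh j =>
    Measure.eq_of_dirac_setOf_ne_lt_one ((hh j).trans_lt (ENNReal.ofReal_lt_one.2 hα1))
  have good_disjoint : Pairwise (Disjoint on good) := by
    refine fun b b' hbb' => Set.disjoint_left.2 fun h hb hb' => hbb' (funext fun j => ?_)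
    have := (good_eq b h hb j).symm.trans (good_eq b' h hb' j)
    cases hj : b j <;> cases hj' : b' j <;> simp_all [target]
  have good_prob : ∀ b, 1 / 2 ≤ ENNReal.ofReal (Real.exp ε) ^ n *
      (A (sample fun _ => false)).toOuterMeasure (good b) := fun b =>
    calc 1 / 2 ≤ (A (sample b)).toOuterMeasure (good b) := by
          have := hUtility (Measure.dirac x₀) (target b) fun j => by
            by_cases hj : b j <;> simp [target, hj, hf, hg]
          rw [Measure.pi_dirac] at this
          exact this.trans (lintegral_dirac_le _ _)
      _ ≤ _ := by
          simpa using le_pow_card_mul_of_neighbor_le (fun S S' h => hDP S S' h (good b))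
            Finset.univ fun i hi => absurd (Finset.mem_univ i) hi
  have packing :=
    (A (sample fun _ => false)).card_mul_le_of_pairwise_disjoint good_disjoint good_prob
  exact log_two_mul_sub_div_le_of_two_pow_half_le hε (by simpa using packing)

/-- Packing lower bound for private PAC multi-learning: every `(ε,0)`-differentially
private PAC `k`-learner with accuracy `α < 1` and confidence `β = 1/2` for a concept
class `C` containing two concepts disagreeing at some point requires sample complexity
`n ≥ (k·ln 2 − ln 2)/ε`. -/
theorem private_multilearner_pure_lower_bound
    {X : Type*} [MeasurableSpace X] (C : Set (X → Bool))
    (f g : X → Bool) (hf : f ∈ C) (hg : g ∈ C) (x₀ : X) (hfg : f x₀ ≠ g x₀)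
    (k n : ℕ) (α ε : ℝ) (hα : 0 ≤ α) (hα1 : α < 1) (hε : 0 < ε)
    (A : (Fin n → X × (Fin k → Bool)) → PMF (Fin k → (X → Bool)))
    -- (ε,0)-differential privacy with respect to changing one row:
    (hDP : ∀ S S' : Fin n → X × (Fin k → Bool),
      (∃ i₀ : Fin n, ∀ i : Fin n, i ≠ i₀ → S i = S' i) →
      ∀ T : Set (Fin k → (X → Bool)),
        (A S).toOuterMeasure T ≤ ENNReal.ofReal (Real.exp ε) * (A S').toOuterMeasure T)
    -- utility: for every distribution `D` and targets `c j ∈ C`, with probability at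
    -- least `1 − β = 1/2` over an i.i.d. sample and the learner's coins, every output
    -- hypothesis `h j` has `error_D(c j, h j) ≤ α`:
    (hUtility : ∀ (D : Measure X) [IsProbabilityMeasure D],
      ∀ c : Fin k → (X → Bool), (∀ j, c j ∈ C) →
      (1 : ENNReal) / 2 ≤
        ∫⁻ xs, (A (fun i => (xs i, fun j => c j (xs i)))).toOuterMeasure
            {h : Fin k → (X → Bool) |
              ∀ j, D {x | h j x ≠ c j x} ≤ ENNReal.ofReal α}
          ∂(Measure.pi (fun _ : Fin n => D))) :
    ((k : ℝ) * Real.log 2 - Real.log 2) / ε ≤ (n : ℝ) :=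
  private_multilearner_pure_lower_bound_general C f g hf hg x₀ hfg k n α ε hα1 hε A hDP hUtility
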